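/- arXiv:1402.3532 — 2 statements merged into one kernel-verified Lean document; each statement's English description precedes it below -/
import Mathlib

section
/- Let K be a field and A = {u_1,...,u_n} a set of monomials of the same degree in K[t_1,...,t_d]. If the reduced Gröbner basis of the toric ideal I_A with respect to every reverse lexicographic order consists of quadratic binomials, then the toric ring K[A] is strongly Koszul. -/
/-!
Common definitions: toric ideals/rings of monomial families, strong Koszulness
with respect to a system of algebra generators, initial ideals with respect to
a relation on exponent vectors, (reduced) Gröbner bases, the (graded) reverse
lexicographic order induced by an ordering of the variables, minimal monomial
generators, and compressedness.
-/

open MvPolynomial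

noncomputable section

/-- The total degree of an exponent vector. -/
def expDeg {n : ℕ} (d : Fin n →₀ ℕ) : ℕ := d.sum fun _ e => e

/-- The toric ideal `I_A ⊆ K[x_1,…,x_n]` of the family of monomials
`u i = t^(a i)` in `K[t_1,…,t_d]`: the kernel of `π : x_i ↦ u_i`. -/
def toricIdeal (K : Type) [Field K] {n d : ℕ} (a : Fin n → (Fin d →₀ ℕ)) :
    Ideal (MvPolynomial (Fin n) K) :=
  RingHom.ker (MvPolynomial.aeval
    (fun i => (MvPolynomial.monomial (a i) (1 : K) : MvPolynomial (Fin d) K)) :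
      MvPolynomial (Fin n) K →ₐ[K] MvPolynomial (Fin d) K).toRingHom

/-- The toric ring `K[A] ⊆ K[t_1,…,t_d]` generated by the monomials `t^(a i)`. -/
def toricRing (K : Type) [Field K] {n d : ℕ} (a : Fin n → (Fin d →₀ ℕ)) :
    Subalgebra K (MvPolynomial (Fin d) K) :=
  Algebra.adjoin K (Set.range fun i => (MvPolynomial.monomial (a i) (1 : K)))

/-- The generator `u_i = t^(a i)`, as an element of the toric ring `K[A]`. -/
def toricGen (K : Type) [Field K] {n d : ℕ} (a : Fin n → (Fin d →₀ ℕ)) (i : Fin n) :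
    toricRing K a :=
  ⟨MvPolynomial.monomial (a i) (1 : K), Algebra.subset_adjoin (Set.mem_range_self i)⟩

/-- A commutative ring `R` is strongly Koszul with respect to the system of
generators `u_1,…,u_n` (of its maximal graded ideal) if for every chain
`i_1 < i_2 < ⋯ < i_r` of indices and every `j = 1,…,r` the colon ideal
`(u_{i_1},…,u_{i_{j-1}}) : u_{i_j}` is generated by a subset of `{u_1,…,u_n}`. -/
def StronglyKoszulWith {R : Type} [CommRing R] {n : ℕ} (u : Fin n → R) : Prop :=
  ∀ (r : ℕ) (c : Fin r → Fin n), StrictMono c → ∀ j : Fin r,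
    ∃ S : Set R, S ⊆ Set.range u ∧
      Submodule.colon (Ideal.span ((fun k => u (c k)) '' {k : Fin r | k < j}))
        (Ideal.span {u (c j)}) = Ideal.span S

/-- The toric ring `K[A]` is strongly Koszul (with respect to its monomial
generators `u_1,…,u_n`, which form its distinguished minimal system of
generators of the same degree). -/
def ToricStronglyKoszul (K : Type) [Field K] {n d : ℕ} (a : Fin n → (Fin d →₀ ℕ)) : Prop :=
  StronglyKoszulWith (toricGen K a)

/-- `dd` is the exponent vector of the initial (leading) monomial of `f` with
respect to the strict comparison `lt` on exponent vectors. -/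
def IsInitialExp {K : Type} [Field K] {n : ℕ}
    (lt : (Fin n →₀ ℕ) → (Fin n →₀ ℕ) → Prop)
    (f : MvPolynomial (Fin n) K) (dd : Fin n →₀ ℕ) : Prop :=
  dd ∈ f.support ∧ ∀ d' ∈ f.support, d' ≠ dd → lt d' dd

/-- The initial ideal `in_lt(I)`: the monomial ideal generated by the initial
monomials of the nonzero elements of `I`. -/
def initialIdeal {K : Type} [Field K] {n : ℕ}
    (lt : (Fin n →₀ ℕ) → (Fin n →₀ ℕ) → Prop)
    (I : Ideal (MvPolynomial (Fin n) K)) : Ideal (MvPolynomial (Fin n) K) :=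
  Ideal.span {m | ∃ f ∈ I, ∃ dd, IsInitialExp lt f dd ∧
    m = MvPolynomial.monomial dd (1 : K)}

/-- `G` is the reduced Gröbner basis of `I` with respect to the strict
comparison `lt` (coming from a monomial order): the elements of `G` lie in `I`,
are monic, their initial monomials generate the initial ideal of `I`,
and no monomial occurring in an element of `G` is divisible by the initial
monomial of another element of `G`. -/
def IsReducedGB {K : Type} [Field K] {n : ℕ}
    (lt : (Fin n →₀ ℕ) → (Fin n →₀ ℕ) → Prop)
    (I : Ideal (MvPolynomial (Fin n) K)) (G : Finset (MvPolynomial (Fin n) K)) : Prop :=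
  (∀ g ∈ G, g ∈ I) ∧
  (∀ g ∈ G, ∃ dd, IsInitialExp lt g dd ∧ MvPolynomial.coeff dd g = 1) ∧
  (initialIdeal lt I =
    Ideal.span {m | ∃ g ∈ G, ∃ dd, IsInitialExp lt g dd ∧
      m = MvPolynomial.monomial dd (1 : K)}) ∧
  (∀ g ∈ G, ∀ g' ∈ G, g' ≠ g → ∀ d' ∈ g.support, ∀ dd, IsInitialExp lt g' dd → ¬ dd ≤ d')

/-- The strict comparison of the (graded) reverse lexicographic order induced by
the ordering `x_{ord 0} < x_{ord 1} < ⋯ < x_{ord (n-1)}` of the variables: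
`x < y` iff `deg x < deg y`, or the degrees agree and `x` has a strictly larger
exponent than `y` at the smallest variable where they differ. -/
def rlexLT {n : ℕ} (ord : Fin n ≃ Fin n) (x y : Fin n →₀ ℕ) : Prop :=
  expDeg x < expDeg y ∨ (expDeg x = expDeg y ∧
    ∃ p : Fin n, y (ord p) < x (ord p) ∧ ∀ q : Fin n, q < p → x (ord q) = y (ord q))

/-- `dd` is (the exponent vector of) a member of `G(I)`, the minimal system of
monomial generators of the monomial ideal `I`: the monomial `x^dd` lies in `I`
but no proper divisor of it does. -/
def IsMinGen {K : Type} [Field K] {n : ℕ} (I : Ideal (MvPolynomial (Fin n) K))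
    (dd : Fin n →₀ ℕ) : Prop :=
  MvPolynomial.monomial dd (1 : K) ∈ I ∧
  ∀ d' : Fin n →₀ ℕ, d' ≤ dd → d' ≠ dd → MvPolynomial.monomial d' (1 : K) ∉ I

/-- The toric ring `K[A]` is compressed: the initial ideal of `I_A` is radical
for every reverse lexicographic order. -/
def ToricCompressed (K : Type) [Field K] {n d : ℕ} (a : Fin n → (Fin d →₀ ℕ)) : Prop :=
  ∀ ord : Fin n ≃ Fin n,
    (initialIdeal (rlexLT ord) (toricIdeal K a)).radical
      = initialIdeal (rlexLT ord) (toricIdeal K a)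

/-- The strict comparison on exponent vectors associated to a monomial order. -/
def MonomialOrder.ltRel {σ : Type*} (m : MonomialOrder σ) :
    (σ →₀ ℕ) → (σ →₀ ℕ) → Prop :=
  fun a b => m.toSyn a < m.toSyn b

/-- A quadratic binomial: a difference of two (monic) monomials of degree 2. -/
def IsQuadBinomial {K : Type} [Field K] {n : ℕ} (g : MvPolynomial (Fin n) K) : Prop :=
  ∃ b c : Fin n →₀ ℕ, expDeg b = 2 ∧ expDeg c = 2 ∧
    g = MvPolynomial.monomial b (1 : K) - MvPolynomial.monomial c (1 : K)

end

open MvPolynomial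

/-!
Fix `s = c j` and `W = {c k | k < j}`. The colon ideal `(u_W) : u_s` contains every `u_l` with
`u_l u_s ∈ (u_i)` for some `i ∈ W`. As `K[A]` and `(u_W)` are spanned by monomials, these `u_l`
generate it once we know: if `t^E u_s = u_i t^{E'}` with `i ∈ W`, then some such `u_l`
divides `t^E`.

Take the reverse lexicographic order in which `x_s` is the smallest and `x_i` the second smallest
variable. In a fiber of the toric map `x^E ↦ t^{∑ E_k a_k}`, every monomial except the normal form
is divisible by the leading monomial `x^B` of a quadratic binomial `x^B - x^C` of the reduced
Gröbner basis, and the move `x^B ↦ x^C` stays in the fiber and goes down. Such a move never lowers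
the exponent of `x_s`, so the normal form of `x_s x^E` contains `x_s`. Among the monomials of the
fiber of `x_i x^{E'}` of the same degree that contain `x_i`, take the smallest one. If it lacks
`x_s`, it is not the normal form; a move applies, and by minimality it must bring in `x_s` (a move
avoiding `x_s` keeps `x_i`, the second smallest variable). Either it replaces `x_i x_e` by
`x_s x_o`, so that `u_o u_s = u_i u_e`, or `x_s x_i` divides the new monomial. In all cases
`t^E u_s = u_s u_l t^{E₄}` with `u_l` as required, and `u_s` cancels.
-/

open Finsupp

section ExponentVectors

variable {n : ℕ}

theorem expDeg_eq_degree (v : Fin n →₀ ℕ) : expDeg v = v.degree := rfl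

theorem finite_setOf_expDeg_eq_and (D : ℕ) (P : (Fin n →₀ ℕ) → Prop) :
    {Y : Fin n →₀ ℕ | expDeg Y = D ∧ P Y}.Finite :=
  (Finsupp.finite_of_degree_eq D).subset fun _ hY => hY.1

theorem exists_eq_single_add_single {v : Fin n →₀ ℕ} {s : Fin n} (h2 : expDeg v = 2)
    (hs : 1 ≤ v s) : ∃ o, v = single s 1 + single o 1 := by
  obtain ⟨w, rfl⟩ : ∃ w, v = single s 1 + w :=
    ⟨v - single s 1, (add_tsub_cancel_of_le (single_le_iff.2 hs)).symm⟩
  have hw : Multiset.card (toMultiset w) = 1 := by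
    rw [card_toMultiset]
    change w.degree = 1
    simp only [expDeg_eq_degree, map_add, degree_single] at h2
    omega
  obtain ⟨o, ho⟩ := Multiset.card_eq_one.1 hw
  refine ⟨o, ?_⟩
  rw [← toMultiset_toFinsupp w, ho, Multiset.toFinsupp_singleton]

theorem single_add_single_le {Y : Fin n →₀ ℕ} {s i : Fin n} (hsi : s ≠ i) (hs : 1 ≤ Y s)
    (hi : 1 ≤ Y i) : single s 1 + single i 1 ≤ Y := by
  intro v
  simp only [Finsupp.coe_add, Pi.add_apply, single_apply]
  split_ifs <;> subst_vars <;> omega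

end ExponentVectors

section Rlex

variable {n : ℕ} (ord : Fin n ≃ Fin n)

def rlexKey (x : Fin n →₀ ℕ) : ℕ ×ₗ Lex (Fin n → ℕᵒᵈ) :=
  toLex (expDeg x, toLex fun p => OrderDual.toDual (x (ord p)))

theorem rlexLT_iff_rlexKey_lt {x y : Fin n →₀ ℕ} :
    rlexLT ord x y ↔ rlexKey ord x < rlexKey ord y := by
  rw [rlexKey, rlexKey, Prod.Lex.toLex_lt_toLex]
  change _ ↔ _ ∨ _ ∧ ∃ p, (∀ q < p, x (ord q) = y (ord q)) ∧ y (ord p) < x (ord p)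
  simp only [rlexLT, and_comm]

theorem rlexKey_injective : Function.Injective (rlexKey ord) := by
  intro x y h
  ext v
  simpa [rlexKey] using congrFun (congrArg (fun k => ofLex (ofLex k).2) h) (ord.symm v)

variable {ord} in
theorem rlexLT_irrefl (x : Fin n →₀ ℕ) : ¬ rlexLT ord x x := by
  rw [rlexLT_iff_rlexKey_lt]
  exact lt_irrefl _

variable {ord} in
theorem rlexLT.not_rlexLT {x y : Fin n →₀ ℕ} (h : rlexLT ord x y) : ¬ rlexLT ord y x := by
  rw [rlexLT_iff_rlexKey_lt] at h ⊢
  exact h.not_gt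

theorem rlexLT_or_rlexLT_of_ne {x y : Fin n →₀ ℕ} (h : x ≠ y) :
    rlexLT ord x y ∨ rlexLT ord y x := by
  simp only [rlexLT_iff_rlexKey_lt]
  exact lt_or_gt_of_ne ((rlexKey_injective ord).ne h)

variable {ord} in
theorem rlexLT.add_left {x y : Fin n →₀ ℕ} (h : rlexLT ord x y) (z : Fin n →₀ ℕ) :
    rlexLT ord (z + x) (z + y) := by
  simp only [rlexLT, expDeg_eq_degree, map_add, Finsupp.add_apply] at h ⊢
  rcases h with h | ⟨hd, p, hp, hq⟩
  · exact Or.inl (by omega)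
  · exact Or.inr ⟨by rw [hd], p, by omega, fun q hqp => by rw [hq q hqp]⟩

variable {ord} in
theorem rlexLT.apply_le {x y : Fin n →₀ ℕ} (h : rlexLT ord x y) (hd : expDeg x = expDeg y)
    (p : Fin n) (hq : ∀ q < p, x (ord q) = y (ord q)) : y (ord p) ≤ x (ord p) := by
  by_contra! hlt
  exact h.not_rlexLT (Or.inr ⟨hd.symm, p, hlt, fun q hqp => (hq q hqp).symm⟩)

theorem exists_forall_not_rlexLT {S : Set (Fin n →₀ ℕ)} (hS : S.Finite) (hne : S.Nonempty) :
    ∃ x ∈ S, ∀ y ∈ S, ¬ rlexLT ord y x := by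
  obtain ⟨x, hx, hmin⟩ := S.exists_min_image (rlexKey ord) hS hne
  exact ⟨x, hx, fun y hy => by rw [rlexLT_iff_rlexKey_lt]; exact (hmin y hy).not_gt⟩

/-- For two distinct variables there is a reverse lexicographic order in which `x_s` is the
smallest variable and `x_i` the second smallest. -/
theorem exists_rlex_smallest_two {s i : Fin n} (hsi : s ≠ i) :
    ∃ ord : Fin n ≃ Fin n,
      (∀ x y, rlexLT ord x y → expDeg x = expDeg y → y s ≤ x s) ∧
      (∀ x y, rlexLT ord x y → expDeg x = expDeg y → x s = y s → y i ≤ x i) := by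
  have hn : 1 < n := by
    by_contra! hn
    exact hsi (Fin.ext (by omega))
  set p₀ : Fin n := ⟨0, by omega⟩
  set p₁ : Fin n := ⟨1, hn⟩
  set e := Equiv.swap p₀ s
  have hei : e i ≠ p₀ := fun h =>
    hsi (e.injective (h.trans (Equiv.swap_apply_right _ _).symm)).symm
  refine ⟨e * Equiv.swap p₁ (e i), ?_⟩
  have h₀ : (e * Equiv.swap p₁ (e i)) p₀ = s := by
    rw [Equiv.Perm.mul_apply, Equiv.swap_apply_of_ne_of_ne (by simp [p₀, p₁, Fin.ext_iff])
      hei.symm, Equiv.swap_apply_left]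
  have h₁ : (e * Equiv.swap p₁ (e i)) p₁ = i := by
    rw [Equiv.Perm.mul_apply, Equiv.swap_apply_left, Equiv.swap_apply_self]
  refine ⟨fun x y h hd => h₀ ▸ h.apply_le hd p₀ fun q hq => absurd hq (by simp [p₀, Fin.lt_def]),
    fun x y h hd hs => h₁ ▸ h.apply_le hd p₁ fun q hq => ?_⟩
  obtain rfl : q = p₀ := Fin.ext (by simp [p₀, p₁, Fin.lt_def] at hq ⊢; omega)
  rwa [h₀]

end Rlex

section QuadMoves

variable {M : Type*} [AddCommMonoid M] {n : ℕ} (a : Fin n → M) (ord : Fin n ≃ Fin n)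

def QuadMove (B C : Fin n →₀ ℕ) : Prop :=
  linearCombination ℕ a B = linearCombination ℕ a C ∧ expDeg B = 2 ∧ expDeg C = 2 ∧
    rlexLT ord C B

def IsReducible (Z : Fin n →₀ ℕ) : Prop :=
  ∃ B C, QuadMove a ord B C ∧ B ≤ Z

/-- The combinatorial content of a reduced Gröbner basis of quadratic binomials `x^B - x^C`:
every monomial that is not the smallest one in its fiber is divisible by some `x^B`. -/
def HasQuadMoves : Prop :=
  ∀ U V : Fin n →₀ ℕ, linearCombination ℕ a U = linearCombination ℕ a V → rlexLT ord V U →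
    IsReducible a ord U

theorem exists_linearCombination_eq_add_add {Y : Fin n →₀ ℕ} {s l : Fin n}
    (h : single s 1 + single l 1 ≤ Y) :
    ∃ E, linearCombination ℕ a Y = a s + a l + linearCombination ℕ a E :=
  ⟨Y - (single s 1 + single l 1), by
    conv_lhs => rw [← add_tsub_cancel_of_le h]
    simp⟩

variable {a ord}

theorem QuadMove.sub_add {B C Z : Fin n →₀ ℕ} (h : QuadMove a ord B C) (hB : B ≤ Z) :
    linearCombination ℕ a (Z - B + C) = linearCombination ℕ a Z ∧
      expDeg (Z - B + C) = expDeg Z ∧ rlexLT ord (Z - B + C) Z := by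
  obtain ⟨hBC, hB2, hC2, hCB⟩ := h
  have hZ : Z - B + B = Z := tsub_add_cancel_of_le hB
  refine ⟨?_, ?_, ?_⟩
  · rw [map_add, ← hBC, ← map_add, hZ]
  · have hdeg := congrArg expDeg hZ
    simp only [expDeg_eq_degree, map_add] at hdeg hB2 hC2 ⊢
    omega
  · simpa only [hZ] using hCB.add_left (Z - B)

theorem HasQuadMoves.eq_of_not_isReducible (hm : HasQuadMoves a ord) {Y Z : Fin n →₀ ℕ}
    (hY : ¬ IsReducible a ord Y) (hZ : ¬ IsReducible a ord Z)
    (h : linearCombination ℕ a Y = linearCombination ℕ a Z) : Y = Z := by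
  by_contra hne
  rcases rlexLT_or_rlexLT_of_ne ord hne with hlt | hlt
  · exact hZ (hm Z Y h.symm hlt)
  · exact hY (hm Y Z h hlt)

theorem exists_not_isReducible {s : Fin n}
    (hs : ∀ x y, rlexLT ord x y → expDeg x = expDeg y → y s ≤ x s) (Z : Fin n →₀ ℕ) :
    ∃ R, ¬ IsReducible a ord R ∧ linearCombination ℕ a R = linearCombination ℕ a Z ∧
      Z s ≤ R s := by
  obtain ⟨R, ⟨hRd, hRZ⟩, hmin⟩ := exists_forall_not_rlexLT ord
    (finite_setOf_expDeg_eq_and (expDeg Z) fun Y =>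
      linearCombination ℕ a Y = linearCombination ℕ a Z) ⟨Z, rfl, rfl⟩
  refine ⟨R, ?_, hRZ, ?_⟩
  · rintro ⟨B, C, hBC, hB⟩
    obtain ⟨h₁, h₂, h₃⟩ := hBC.sub_add hB
    exact hmin _ ⟨h₂.trans hRd, h₁.trans hRZ⟩ h₃
  · rcases eq_or_ne R Z with rfl | hne
    · rfl
    rcases rlexLT_or_rlexLT_of_ne ord hne with hlt | hlt
    · exact hs R Z hlt hRd
    · exact absurd hlt (hmin Z ⟨rfl, rfl⟩)

theorem HasQuadMoves.exists_exchange_of_fiber (hm : HasQuadMoves a ord) {s i : Fin n}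
    (hsi : s ≠ i) (hi : ∀ x y, rlexLT ord x y → expDeg x = expDeg y → x s = y s → y i ≤ x i)
    {R : Fin n →₀ ℕ} (hR : ¬ IsReducible a ord R) (hRs : 1 ≤ R s) {Z : Fin n →₀ ℕ}
    (hZR : linearCombination ℕ a Z = linearCombination ℕ a R) (hZi : 1 ≤ Z i) :
    ∃ l, (∃ E₅, a l + a s = a i + linearCombination ℕ a E₅) ∧
      ∃ E₄, linearCombination ℕ a Z = a s + a l + linearCombination ℕ a E₄ := by
  obtain ⟨Y, ⟨hYd, hYZ, hYi⟩, hmin⟩ := exists_forall_not_rlexLT ord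
    (finite_setOf_expDeg_eq_and (expDeg Z) fun Y =>
      linearCombination ℕ a Y = linearCombination ℕ a Z ∧ 1 ≤ Y i) ⟨Z, rfl, rfl, hZi⟩
  have exchange_of_s_i : ∀ W, linearCombination ℕ a W = linearCombination ℕ a Z → 1 ≤ W s →
      1 ≤ W i → ∃ l, (∃ E₅, a l + a s = a i + linearCombination ℕ a E₅) ∧
        ∃ E₄, linearCombination ℕ a Z = a s + a l + linearCombination ℕ a E₄ :=
    fun W hW hWs hWi => ⟨i, ⟨single s 1, by simp [add_comm]⟩,
      hW ▸ exists_linearCombination_eq_add_add a (single_add_single_le hsi hWs hWi)⟩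
  by_cases hYs : 1 ≤ Y s
  · exact exchange_of_s_i Y hYZ hYs hYi
  obtain ⟨B, C, hBC, hBY⟩ : IsReducible a ord Y := by
    by_contra hY
    obtain rfl := hm.eq_of_not_isReducible hY hR (hYZ.trans hZR)
    omega
  obtain ⟨h₁, h₂, h₃⟩ := hBC.sub_add hBY
  have hBs : B s = 0 := by have := hBY s; omega
  by_cases hexch : 1 ≤ C s ∧ 1 ≤ B i
  · obtain ⟨o, rfl⟩ := exists_eq_single_add_single hBC.2.2.1 hexch.1
    obtain ⟨e, rfl⟩ := exists_eq_single_add_single hBC.2.1 hexch.2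
    refine ⟨o, ⟨single e 1, by simpa [add_comm] using hBC.1.symm⟩, ?_⟩
    rw [← hYZ, ← h₁]
    exact exists_linearCombination_eq_add_add a le_add_self
  have hY'i : 1 ≤ (Y - B + C) i := by
    have : B i ≤ C i ∨ B i = 0 := by
      by_cases hCs : C s = 0
      · exact .inl (hi C B hBC.2.2.2 (hBC.2.2.1.trans hBC.2.1.symm) (hCs.trans hBs.symm))
      · omega
    simp only [Finsupp.coe_add, Finsupp.coe_tsub, Pi.add_apply, Pi.sub_apply]
    omega
  by_cases hY's : 1 ≤ (Y - B + C) s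
  · exact exchange_of_s_i _ (h₁.trans hYZ) hY's hY'i
  · exact absurd h₃ (hmin _ ⟨h₂.trans hYd, h₁.trans hYZ, hY'i⟩)

theorem exists_exchange [IsRightCancelAdd M]
    (hm : ∀ ord, HasQuadMoves a ord) {s i : Fin n} (hsi : s ≠ i) {E E' : Fin n →₀ ℕ}
    (h : linearCombination ℕ a E + a s = a i + linearCombination ℕ a E') :
    ∃ l, (∃ E₅, a l + a s = a i + linearCombination ℕ a E₅) ∧
      ∃ E₄, linearCombination ℕ a E = a l + linearCombination ℕ a E₄ := by
  obtain ⟨ord, hs, hi⟩ := exists_rlex_smallest_two hsi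
  obtain ⟨R, hR, hRE, hRs⟩ := exists_not_isReducible (a := a) hs (single s 1 + E)
  obtain ⟨l, hl, E₄, hE₄⟩ := (hm ord).exists_exchange_of_fiber hsi hi hR
    (by simp at hRs; omega) (Z := single i 1 + E') (by simp [hRE, h, add_comm]) (by simp)
  refine ⟨l, hl, E₄, add_right_cancel (b := a s) ?_⟩
  simp only [map_add, linearCombination_single, one_smul] at hE₄
  rw [h, hE₄]
  abel

end QuadMoves

section Toric

variable {K : Type} [Field K] {n d : ℕ} (a : Fin n → (Fin d →₀ ℕ))

theorem aeval_monomial_toric (E : Fin n →₀ ℕ) (c : K) :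
    aeval (fun i => monomial (a i) (1 : K)) (monomial E c) =
      monomial (linearCombination ℕ a E) c := by
  rw [aeval_monomial, linearCombination_apply, monomial_finsupp_sum_index, algebraMap_eq]
  simp [monomial_pow]

variable {a}

theorem binomial_mem_toricIdeal_iff {U V : Fin n →₀ ℕ} :
    monomial U (1 : K) - monomial V 1 ∈ toricIdeal K a ↔
      linearCombination ℕ a U = linearCombination ℕ a V := by
  change aeval _ _ = 0 ↔ _
  rw [map_sub, aeval_monomial_toric, aeval_monomial_toric, sub_eq_zero,
    monomial_left_inj one_ne_zero]

theorem isInitialExp_binomial_iff {lt : (Fin n →₀ ℕ) → (Fin n →₀ ℕ) → Prop}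
    {b c e : Fin n →₀ ℕ} (hbc : b ≠ c) :
    IsInitialExp lt (monomial b (1 : K) - monomial c 1) e ↔
      (e = b ∧ lt c b) ∨ (e = c ∧ lt b c) := by
  have hsupp : (monomial b (1 : K) - monomial c 1).support = {b, c} := by
    ext e
    simp only [MvPolynomial.mem_support_iff, coeff_sub, coeff_monomial, Finset.mem_insert,
      Finset.mem_singleton]
    split_ifs <;> simp_all [eq_comm]
  simp only [IsInitialExp, hsupp, Finset.mem_insert, Finset.mem_singleton]
  grind

theorem hasQuadMoves_of_isReducedGB {ord : Fin n ≃ Fin n}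
    {G : Finset (MvPolynomial (Fin n) K)} (hGB : IsReducedGB (rlexLT ord) (toricIdeal K a) G)
    (hquad : ∀ g ∈ G, IsQuadBinomial g) :
    HasQuadMoves a ord := by
  intro U V hUV hVU
  have hU : monomial U (1 : K) ∈ initialIdeal (rlexLT ord) (toricIdeal K a) :=
    Ideal.subset_span ⟨_, binomial_mem_toricIdeal_iff.2 hUV, U,
      (isInitialExp_binomial_iff fun h => rlexLT_irrefl V (h ▸ hVU)).2 (.inl ⟨rfl, hVU⟩), rfl⟩
  have hspan : {m | ∃ g ∈ G, ∃ e, IsInitialExp (rlexLT ord) g e ∧ m = monomial e (1 : K)} =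
      (fun e => monomial e (1 : K)) '' {e | ∃ g ∈ G, IsInitialExp (rlexLT ord) g e} := by
    ext m
    simp only [Set.mem_ofPred_eq, Set.mem_image]
    grind
  rw [hGB.2.2.1, hspan, mem_ideal_span_monomial_image] at hU
  obtain ⟨e, ⟨g, hg, he⟩, heU⟩ := hU U (by simp)
  obtain ⟨b, c, hb, hc, rfl⟩ := hquad g hg
  have hbc : b ≠ c := by
    rintro rfl
    simp [IsInitialExp] at he
  have hI := binomial_mem_toricIdeal_iff.1 (hGB.1 _ hg)
  rcases (isInitialExp_binomial_iff hbc).1 he with ⟨rfl, hcb⟩ | ⟨rfl, hbc'⟩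
  · exact ⟨e, c, ⟨hI, hb, hc, hcb⟩, heU⟩
  · exact ⟨e, b, ⟨hI.symm, hc, hb, hbc'⟩, heU⟩

theorem monomial_mem_toricRing (E : Fin n →₀ ℕ) :
    monomial (linearCombination ℕ a E) (1 : K) ∈ toricRing K a := by
  rw [toricRing, Algebra.adjoin_range_eq_range_aeval]
  exact ⟨monomial E 1, aeval_monomial_toric a E 1⟩

variable (K a) in
noncomputable def toricMonomial (E : Fin n →₀ ℕ) : toricRing K a :=
  ⟨monomial (linearCombination ℕ a E) 1, monomial_mem_toricRing E⟩

theorem support_subset_of_mem_toricRing {v : MvPolynomial (Fin d) K} (hv : v ∈ toricRing K a) :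
    (v.support : Set (Fin d →₀ ℕ)) ⊆ Set.range (linearCombination ℕ a) := by
  rw [toricRing, Algebra.adjoin_range_eq_range_aeval] at hv
  obtain ⟨p, rfl⟩ := hv
  induction p using MvPolynomial.induction_on' with
  | monomial E c =>
    rw [AlgHom.toRingHom_eq_coe, RingHom.coe_coe, aeval_monomial_toric]
    exact (Finset.coe_subset.2 support_monomial_subset).trans (by simp)
  | add p q hp hq =>
    rw [map_add]
    exact (Finset.coe_subset.2 MvPolynomial.support_add).trans (by simpa using ⟨hp, hq⟩)

theorem exists_eq_add_of_mem_support_of_mem_span {W : Set (Fin n)} {w : toricRing K a}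
    (hw : w ∈ Ideal.span (toricGen K a '' W)) {m : Fin d →₀ ℕ}
    (hm : m ∈ (w : MvPolynomial (Fin d) K).support) :
    ∃ i ∈ W, ∃ E, m = a i + linearCombination ℕ a E := by
  induction hw using Submodule.span_induction generalizing m with
  | mem x hx =>
    obtain ⟨i, hi, rfl⟩ := hx
    refine ⟨i, hi, 0, ?_⟩
    simpa [toricGen, support_monomial, eq_comm] using hm
  | zero => simp at hm
  | add x y _ _ hx hy =>
    rcases Finset.mem_union.1 (MvPolynomial.support_add hm) with h | h
    exacts [hx h, hy h]
  | smul r x _ hx =>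
    obtain ⟨m₁, hm₁, m₂, hm₂, rfl⟩ := Finset.mem_add.1 (support_mul _ _ hm)
    obtain ⟨E₁, rfl⟩ := support_subset_of_mem_toricRing r.2 hm₁
    obtain ⟨i, hi, E₂, rfl⟩ := hx hm₂
    exact ⟨i, hi, E₁ + E₂, by rw [map_add]; abel⟩

theorem mem_of_forall_toricMonomial_mem {I : Ideal (toricRing K a)} {v : toricRing K a}
    (h : ∀ E, linearCombination ℕ a E ∈ (v : MvPolynomial (Fin d) K).support →
      toricMonomial K a E ∈ I) : v ∈ I := by
  suffices hv : (v : MvPolynomial (Fin d) K) ∈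
      (I.restrictScalars K).map (toricRing K a).val.toLinearMap by
    obtain ⟨w, hw, hwv⟩ := hv
    exact Subtype.ext hwv ▸ hw
  rw [(v : MvPolynomial (Fin d) K).as_sum]
  refine Submodule.sum_mem _ fun m hm => ?_
  obtain ⟨E, rfl⟩ := support_subset_of_mem_toricRing v.2 hm
  refine ⟨coeff (linearCombination ℕ a E) v.1 • toricMonomial K a E,
    (I.restrictScalars K).smul_mem _ (h E hm), ?_⟩
  simp [toricMonomial, smul_monomial]

theorem colon_span_toricGen_eq {W : Set (Fin n)} {s : Fin n}
    (hx : ∀ i ∈ W, ∀ E E', linearCombination ℕ a E + a s = a i + linearCombination ℕ a E' →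
      ∃ l, (∃ E₅, a l + a s = a i + linearCombination ℕ a E₅) ∧
        ∃ E₄, linearCombination ℕ a E = a l + linearCombination ℕ a E₄) :
    Submodule.colon (Ideal.span (toricGen K a '' W)) (Ideal.span {toricGen K a s}) =
      Ideal.span (toricGen K a ''
        {l | ∃ i ∈ W, ∃ E, a l + a s = a i + linearCombination ℕ a E}) := by
  apply le_antisymm
  · intro v hv
    rw [Ideal.mem_colon_span_singleton] at hv
    refine mem_of_forall_toricMonomial_mem fun E hE => ?_
    have hEs : linearCombination ℕ a E + a s ∈
        ((v * toricGen K a s : toricRing K a) : MvPolynomial (Fin d) K).support := by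
      change _ ∈ ((v : MvPolynomial (Fin d) K) * monomial (a s) 1).support
      rwa [MvPolynomial.mem_support_iff, coeff_mul_monomial, mul_one,
        ← MvPolynomial.mem_support_iff]
    obtain ⟨i, hi, E', hE'⟩ := exists_eq_add_of_mem_support_of_mem_span hv hEs
    obtain ⟨l, ⟨E₅, hl⟩, E₄, hE₄⟩ := hx i hi E E' hE'
    have hfac : toricMonomial K a E = toricMonomial K a E₄ * toricGen K a l :=
      Subtype.ext (by simp [toricMonomial, toricGen, monomial_mul, hE₄, add_comm])
    rw [hfac]
    exact Ideal.mul_mem_left _ _ (Ideal.subset_span ⟨l, ⟨i, hi, E₅, hl⟩, rfl⟩)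
  · rw [Ideal.span_le]
    rintro _ ⟨l, ⟨i, hi, E₅, hl⟩, rfl⟩
    rw [SetLike.mem_coe, Ideal.mem_colon_span_singleton]
    have hfac : toricGen K a l * toricGen K a s = toricMonomial K a E₅ * toricGen K a i :=
      Subtype.ext (by simp [toricMonomial, toricGen, monomial_mul, hl, add_comm])
    rw [hfac]
    exact Ideal.mul_mem_left _ _ (Ideal.subset_span ⟨i, hi, rfl⟩)

end Toric

theorem all_rlex_quadratic_implies_stronglyKoszul_general
    (K : Type) [Field K] {n d : ℕ} (a : Fin n → (Fin d →₀ ℕ))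
    (H : ∀ ord : Fin n ≃ Fin n, ∃ G : Finset (MvPolynomial (Fin n) K),
      IsReducedGB (rlexLT ord) (toricIdeal K a) G ∧ ∀ g ∈ G, IsQuadBinomial g) :
    ToricStronglyKoszul K a := by
  have hm (ord : Fin n ≃ Fin n) : HasQuadMoves a ord := by
    obtain ⟨_, hGB, hquad⟩ := H ord
    exact hasQuadMoves_of_isReducedGB hGB hquad
  intro r c hc j
  have hW : (fun k => toricGen K a (c k)) '' {k | k < j} =
      toricGen K a '' (c '' {k | k < j}) := (Set.image_image _ _ _).symm
  refine ⟨_, Set.image_subset_range _ _, hW ▸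
    colon_span_toricGen_eq fun i hi E E' h => exists_exchange hm ?_ h⟩
  rintro rfl
  obtain ⟨k, hk, hkj⟩ := hi
  exact (show k < j from hk).ne (hc.injective hkj)

/-- **Corollary 1.3.**  If the reduced Gröbner basis of the toric ideal `I_A`
with respect to every reverse lexicographic order consists of quadratic
binomials, then the toric ring `K[A]` is strongly Koszul. -/
theorem all_rlex_quadratic_implies_stronglyKoszul
    (K : Type) [Field K] {n d : ℕ} (a : Fin n → (Fin d →₀ ℕ))
    (δ : ℕ) (hdeg : ∀ i, expDeg (a i) = δ) (hinj : Function.Injective a)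
    (H : ∀ ord : Fin n ≃ Fin n, ∃ G : Finset (MvPolynomial (Fin n) K),
      IsReducedGB (rlexLT ord) (toricIdeal K a) G ∧ ∀ g ∈ G, IsQuadBinomial g) :
    ToricStronglyKoszul K a :=
  all_rlex_quadratic_implies_stronglyKoszul_general K a H
end

section
/- Let K be a field, n ≥ 1, and let K[A_n] = K[s, t_1 s, ..., t_n s, t_1^{-1} s, ..., t_n^{-1} s] ⊆ K[s, t_1^{±1}, ..., t_n^{±1}], with toric ideal I_{A_n} ⊆ K[z, x_1, ..., x_n, y_1, ..., y_n] the kernel of the map sending z ↦ s, x_i ↦ t_i s, y_i ↦ t_i^{-1} s. Then the set {x_i y_i − z^2 : 1 ≤ i ≤ n} ∪ {x_i y_i − x_j y_j : 1 ≤ i < j ≤ n} is a Gröbner basis of I_{A_n} with respect to every monomial order (a universal Gröbner basis of I_{A_n}). -/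
/-!
Common definitions: toric ideals/rings of monomial families, strong Koszulness
with respect to a system of algebra generators, initial ideals with respect to
a relation on exponent vectors, (reduced) Gröbner bases, the (graded) reverse
lexicographic order induced by an ordering of the variables, minimal monomial
generators, and compressedness.
-/

open MvPolynomial

open MvPolynomial

noncomputable section

/-- Exponents of Laurent monomials in `K[s, t_1^{±1}, …, t_n^{±1}]`:
the `s`-exponent (in `ℕ`) together with the `t`-exponents (in `ℤ`). -/
abbrev LaurentExp (n : ℕ) := ℕ × (Fin n →₀ ℤ)

/-- The Laurent polynomial ring `K[s, t_1^{±1}, …, t_n^{±1}]`. -/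
abbrev LaurentRing (K : Type) [Field K] (n : ℕ) := AddMonoidAlgebra K (LaurentExp n)

/-- The exponent vectors of the monomials
`A_n = {s, t_1 s, …, t_n s, t_1⁻¹ s, …, t_n⁻¹ s}`: index `0` gives `s`,
index `i` with `1 ≤ i ≤ n` gives `t_i s`, and index `n + i` gives `t_i⁻¹ s`. -/
def expA (n : ℕ) (m : Fin (2 * n + 1)) : LaurentExp n :=
  if h0 : (m : ℕ) = 0 then (1, 0)
  else if hx : (m : ℕ) ≤ n then
    (1, Finsupp.single ⟨(m : ℕ) - 1, by have := m.isLt; omega⟩ 1)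
  else (1, - Finsupp.single ⟨(m : ℕ) - 1 - n, by have := m.isLt; omega⟩ 1)

/-- The toric ideal `I_{A_n} ⊆ K[z, x_1, …, x_n, y_1, …, y_n]`, the kernel of
`z ↦ s`, `x_i ↦ t_i s`, `y_i ↦ t_i⁻¹ s`. -/
def toricIdealA (K : Type) [Field K] (n : ℕ) : Ideal (MvPolynomial (Fin (2 * n + 1)) K) :=
  RingHom.ker (MvPolynomial.aeval
    (fun v => (AddMonoidAlgebra.single (expA n v) (1 : K) : LaurentRing K n)) :
      MvPolynomial (Fin (2 * n + 1)) K →ₐ[K] LaurentRing K n).toRingHom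

/-- The variable `z` (mapping to `s`). -/
def zIdx (n : ℕ) : Fin (2 * n + 1) := ⟨0, by omega⟩

/-- The variable `x_i` (mapping to `t_i s`). -/
def xIdx (n : ℕ) (i : Fin n) : Fin (2 * n + 1) := ⟨(i : ℕ) + 1, by have := i.isLt; omega⟩

/-- The variable `y_i` (mapping to `t_i⁻¹ s`). -/
def yIdx (n : ℕ) (i : Fin n) : Fin (2 * n + 1) := ⟨n + 1 + (i : ℕ), by have := i.isLt; omega⟩

/-- `G` is a Gröbner basis of `I` with respect to the strict comparison `lt`:
`G ⊆ I` and the initial monomials of the elements of `G` generate the initial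
ideal of `I`. -/
def IsGroebnerBasis {K : Type} [Field K] {n : ℕ}
    (lt : (Fin n →₀ ℕ) → (Fin n →₀ ℕ) → Prop)
    (I : Ideal (MvPolynomial (Fin n) K)) (G : Set (MvPolynomial (Fin n) K)) : Prop :=
  (∀ g ∈ G, g ∈ I) ∧
  initialIdeal lt I =
    Ideal.span {mm | ∃ g ∈ G, ∃ dd, IsInitialExp lt g dd ∧
      mm = MvPolynomial.monomial dd (1 : K)}

/-!
The toric map sends `x^d` to `s^{deg d} t^{w(d)}`. Splitting off as many quadrics `z²` and
`x_i y_i` as possible writes every monomial as `r q_1 ⋯ q_N`, where the residual `r` and the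
number `N` of quadrics depend only on the image of the monomial. All quadrics have the same
image `s²`, so a fibre of the toric map consists of `r` times all products of `N` quadrics.
For a monomial order let `q₀` be the smallest quadric: the least monomial of a fibre is
`r q₀^N`, and any other one is divisible by a quadric `q > q₀`, the leading monomial of the
binomial `q - q₀`. The leading monomial of an element of the toric ideal is never the least of
its fibre, since the coefficients over each fibre cancel.
-/

section MonomialMap

variable {σ M K : Type*} [AddCommMonoid M] [CommSemiring K] (e : σ → M)

theorem aeval_single_monomial (d : σ →₀ ℕ) (c : K) :
    aeval (fun v => AddMonoidAlgebra.single (e v) (1 : K)) (monomial d c) =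
      AddMonoidAlgebra.single (Finsupp.weight e d) c := by
  simp [aeval_monomial, AddMonoidAlgebra.single_pow, Finsupp.weight_apply]

theorem coeff_aeval_single [DecidableEq M] (f : MvPolynomial σ K) (w : M) :
    (aeval (fun v => AddMonoidAlgebra.single (e v) (1 : K)) f).coeff w =
      ∑ d ∈ f.support with Finsupp.weight e d = w, coeff d f := by
  conv_lhs => rw [f.as_sum, map_sum]
  simp only [aeval_single_monomial, AddMonoidAlgebra.coeff_sum, AddMonoidAlgebra.coeff_single,
    Finset.sum_filter, Finsupp.finsetSum_apply, Finsupp.single_apply]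

theorem exists_ne_weight_eq_of_aeval_eq_zero {f : MvPolynomial σ K}
    (hf : aeval (fun v => AddMonoidAlgebra.single (e v) (1 : K)) f = 0) {d : σ →₀ ℕ}
    (hd : d ∈ f.support) :
    ∃ d' ∈ f.support, d' ≠ d ∧ Finsupp.weight e d' = Finsupp.weight e d := by
  classical
  by_contra! h
  have hfib : {d' ∈ f.support | Finsupp.weight e d' = Finsupp.weight e d} = {d} := by
    refine Finset.eq_singleton_iff_unique_mem.mpr
      ⟨Finset.mem_filter.mpr ⟨hd, rfl⟩, fun d' hd' => ?_⟩
    rw [Finset.mem_filter] at hd'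
    by_contra hne
    exact h d' hd'.1 hne hd'.2
  have hcoeff := coeff_aeval_single e f (Finsupp.weight e d)
  rw [hf, hfib, Finset.sum_singleton] at hcoeff
  exact mem_support_iff.mp hd (by simpa using hcoeff.symm)

end MonomialMap

theorem isGroebnerBasis_ker_aeval_single {M K : Type} [AddCommMonoid M] [Field K] {N : ℕ}
    (e : Fin N → M)
    (lt : (Fin N →₀ ℕ) → (Fin N →₀ ℕ) → Prop) (G : Set (MvPolynomial (Fin N) K))
    (hG : ∀ g ∈ G, aeval (fun v => AddMonoidAlgebra.single (e v) (1 : K)) g = 0)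
    (hlead : ∀ d d', Finsupp.weight e d' = Finsupp.weight e d → lt d' d →
      monomial d 1 ∈ Ideal.span
        {mm | ∃ g ∈ G, ∃ dd, IsInitialExp lt g dd ∧ mm = monomial dd (1 : K)}) :
    IsGroebnerBasis lt
      (RingHom.ker (aeval (fun v => AddMonoidAlgebra.single (e v) (1 : K))).toRingHom) G := by
  refine ⟨hG, le_antisymm ?_ (Ideal.span_mono ?_)⟩
  · refine Ideal.span_le.mpr ?_
    rintro _ ⟨f, hf, d, hd, rfl⟩
    obtain ⟨d', hd', hne, hw⟩ := exists_ne_weight_eq_of_aeval_eq_zero e hf hd.1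
    exact hlead d d' hw (hd.2 d' hd' hne)
  · rintro _ ⟨g, hg, d, hd, rfl⟩
    exact ⟨g, hG g hg, d, hd, rfl⟩

section LeadingTerm

variable {K : Type} [Field K] {N : ℕ}

theorem isInitialExp_neg_iff (lt : (Fin N →₀ ℕ) → (Fin N →₀ ℕ) → Prop)
    (f : MvPolynomial (Fin N) K) (d : Fin N →₀ ℕ) :
    IsInitialExp lt (-f) d ↔ IsInitialExp lt f d := by
  simp only [IsInitialExp, support_neg]

theorem isInitialExp_monomial_sub_monomial (m : MonomialOrder (Fin N)) {b c : Fin N →₀ ℕ}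
    (h : m.toSyn c < m.toSyn b) :
    IsInitialExp m.ltRel (monomial b (1 : K) - monomial c 1) b := by
  have hcb : c ≠ b := fun hcb => (hcb ▸ h).false
  refine ⟨by simp [coeff_monomial, hcb], fun d hd hdb => ?_⟩
  rcases Finset.mem_union.mp (support_sub _ _ _ hd) with hd' | hd'
  · exact absurd (Finset.mem_singleton.mp (support_monomial_subset hd')) hdb
  · rw [Finset.mem_singleton.mp (support_monomial_subset hd')]
    exact h

end LeadingTerm

theorem sum_nsmul_le_sum_nsmul_of_eq_min {ι M : Type*} [Fintype ι] [AddCommMonoid M]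
    [PartialOrder M] [IsOrderedAddMonoid M] (Q : ι → M) {k₀ : ι} (hQ : ∀ k, Q k₀ ≤ Q k)
    {c c' : ι → ℕ} (hc : ∀ k, c k ≠ 0 → Q k = Q k₀) (hsum : ∑ k, c k = ∑ k, c' k) :
    ∑ k, c k • Q k ≤ ∑ k, c' k • Q k :=
  calc ∑ k, c k • Q k = ∑ k, c k • Q k₀ :=
        Finset.sum_congr rfl fun k _ => by
          by_cases hk : c k = 0
          · simp [hk]
          · rw [hc k hk]
    _ = ∑ k, c' k • Q k₀ := by rw [← Finset.sum_smul, hsum, Finset.sum_smul]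
    _ ≤ ∑ k, c' k • Q k := Finset.sum_le_sum fun k _ => nsmul_le_nsmul_right (hQ k) _

namespace ToricAn

variable {n : ℕ}

def varEquiv (n : ℕ) : Option (Fin n ⊕ Fin n) ≃ Fin (2 * n + 1) :=
  (Equiv.optionCongr (finSumFinEquiv.trans (finCongr (two_mul n).symm))).trans
    (finSuccEquiv (2 * n)).symm

@[simp] theorem varEquiv_none : varEquiv n none = zIdx n := rfl

@[simp] theorem varEquiv_inl (i : Fin n) : varEquiv n (some (.inl i)) = xIdx n i := rfl

@[simp] theorem varEquiv_inr (i : Fin n) : varEquiv n (some (.inr i)) = yIdx n i :=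
  Fin.ext (by simp [varEquiv, yIdx]; omega)

theorem sum_univ_eq_zIdx_add_sum {M : Type*} [AddCommMonoid M] (g : Fin (2 * n + 1) → M) :
    ∑ v, g v = g (zIdx n) + ∑ i, (g (xIdx n i) + g (yIdx n i)) := by
  rw [← (varEquiv n).sum_comp, Fintype.sum_option, Fintype.sum_sum_type, Finset.sum_add_distrib]
  simp

theorem expA_zIdx : expA n (zIdx n) = (1, 0) := rfl

theorem expA_xIdx (i : Fin n) : expA n (xIdx n i) = (1, Finsupp.single i 1) := by
  have hi : (i : ℕ) + 1 ≤ n := i.isLt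
  simp only [expA, xIdx, Nat.add_one_ne_zero, hi, dite_true, dite_false, Nat.add_sub_cancel]

theorem expA_yIdx (i : Fin n) : expA n (yIdx n i) = (1, -Finsupp.single i 1) := by
  have hy : ((yIdx n i : Fin (2 * n + 1)) : ℕ) = n + 1 + i := rfl
  simp only [expA, hy]
  rw [dif_neg (by omega), dif_neg (by omega)]
  congr 3
  exact Fin.ext (by simp only; omega)

theorem eq_single_add_sum_single (d : Fin (2 * n + 1) →₀ ℕ) :
    d = Finsupp.single (zIdx n) (d (zIdx n)) +
      ∑ i, (Finsupp.single (xIdx n i) (d (xIdx n i)) +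
        Finsupp.single (yIdx n i) (d (yIdx n i))) := by
  conv_lhs => rw [← Finsupp.univ_sum_single d]
  exact sum_univ_eq_zIdx_add_sum _

theorem weight_expA_fst (d : Fin (2 * n + 1) →₀ ℕ) :
    (Finsupp.weight (expA n) d).1 = d (zIdx n) + ∑ i, (d (xIdx n i) + d (yIdx n i)) := by
  rw [Finsupp.weight_eq_sum, Prod.fst_sum, sum_univ_eq_zIdx_add_sum]
  simp [expA_zIdx, expA_xIdx, expA_yIdx]

theorem weight_expA_snd (d : Fin (2 * n + 1) →₀ ℕ) (j : Fin n) :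
    (Finsupp.weight (expA n) d).2 j = (d (xIdx n j) : ℤ) - d (yIdx n j) := by
  rw [Finsupp.weight_eq_sum, Prod.snd_sum, Finsupp.finsetSum_apply, sum_univ_eq_zIdx_add_sum]
  simp [expA_zIdx, expA_xIdx, expA_yIdx, Finsupp.single_apply, Finset.sum_add_distrib,
    sub_eq_add_neg]

def quadExp : Option (Fin n) → (Fin (2 * n + 1) →₀ ℕ)
  | none => Finsupp.single (zIdx n) 2
  | some i => Finsupp.single (xIdx n i) 1 + Finsupp.single (yIdx n i) 1

theorem weight_quadExp (k : Option (Fin n)) :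
    Finsupp.weight (expA n) (quadExp k) = (2, 0) := by
  cases k <;> simp [quadExp, expA_zIdx, expA_xIdx, expA_yIdx, Finsupp.weight_single]

def quadMult (d : Fin (2 * n + 1) →₀ ℕ) : Option (Fin n) → ℕ
  | none => d (zIdx n) / 2
  | some i => min (d (xIdx n i)) (d (yIdx n i))

def residual (d : Fin (2 * n + 1) →₀ ℕ) : Fin (2 * n + 1) →₀ ℕ :=
  Finsupp.single (zIdx n) (d (zIdx n) % 2) +
    ∑ i, (Finsupp.single (xIdx n i) (d (xIdx n i) - quadMult d (some i)) +
      Finsupp.single (yIdx n i) (d (yIdx n i) - quadMult d (some i)))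

theorem residual_add_sum_quadMult (d : Fin (2 * n + 1) →₀ ℕ) :
    residual d + ∑ k, quadMult d k • quadExp k = d := by
  have hz : Finsupp.single (zIdx n) (d (zIdx n) % 2) + quadMult d none • quadExp none =
      Finsupp.single (zIdx n) (d (zIdx n)) := by
    rw [quadExp, quadMult, Finsupp.smul_single, ← Finsupp.single_add, smul_eq_mul,
      Nat.mod_add_div']
  have hxy : ∀ i, Finsupp.single (xIdx n i) (d (xIdx n i) - quadMult d (some i)) +
      Finsupp.single (yIdx n i) (d (yIdx n i) - quadMult d (some i)) +
        quadMult d (some i) • quadExp (some i) =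
      Finsupp.single (xIdx n i) (d (xIdx n i)) + Finsupp.single (yIdx n i) (d (yIdx n i)) := by
    intro i
    rw [quadExp, smul_add, Finsupp.smul_single, Finsupp.smul_single, smul_eq_mul, mul_one,
      add_add_add_comm, ← Finsupp.single_add, ← Finsupp.single_add]
    congr 2 <;> simp only [quadMult] <;> omega
  conv_rhs => rw [eq_single_add_sum_single d, ← hz, ← Finset.sum_congr rfl fun i _ => hxy i]
  rw [Fintype.sum_option, Finset.sum_add_distrib, residual]
  abel

section SameWeight

variable {d d' : Fin (2 * n + 1) →₀ ℕ}
  (h : Finsupp.weight (expA n) d = Finsupp.weight (expA n) d')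
include h

theorem sub_quadMult_eq_of_weight_eq (i : Fin n) :
    d (xIdx n i) - quadMult d (some i) = d' (xIdx n i) - quadMult d' (some i) ∧
      d (yIdx n i) - quadMult d (some i) = d' (yIdx n i) - quadMult d' (some i) := by
  have := congrArg (fun w => w.2 i) h
  simp only [weight_expA_snd] at this
  simp only [quadMult]
  omega

theorem zIdx_add_two_mul_sum_quadMult_eq_of_weight_eq :
    d (zIdx n) + 2 * ∑ i, quadMult d (some i) =
      d' (zIdx n) + 2 * ∑ i, quadMult d' (some i) := by
  have hsplit : ∀ d : Fin (2 * n + 1) →₀ ℕ, ∑ i, (d (xIdx n i) + d (yIdx n i)) =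
      ∑ i, ((d (xIdx n i) - quadMult d (some i)) + (d (yIdx n i) - quadMult d (some i))) +
        2 * ∑ i, quadMult d (some i) := fun d => by
    rw [Finset.mul_sum, ← Finset.sum_add_distrib]
    exact Finset.sum_congr rfl fun i _ => by simp only [quadMult]; omega
  have hres : ∑ i, ((d (xIdx n i) - quadMult d (some i)) + (d (yIdx n i) - quadMult d (some i))) =
      ∑ i, ((d' (xIdx n i) - quadMult d' (some i)) + (d' (yIdx n i) - quadMult d' (some i))) :=
    Finset.sum_congr rfl fun i _ => by
      rw [(sub_quadMult_eq_of_weight_eq h i).1, (sub_quadMult_eq_of_weight_eq h i).2]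
  have hdeg := congrArg Prod.fst h
  simp only [weight_expA_fst, hsplit d, hsplit d', hres] at hdeg
  omega

theorem residual_eq_of_weight_eq : residual d = residual d' := by
  have hz := zIdx_add_two_mul_sum_quadMult_eq_of_weight_eq h
  simp only [residual, (sub_quadMult_eq_of_weight_eq h _).1, (sub_quadMult_eq_of_weight_eq h _).2]
  congr 2
  omega

theorem sum_quadMult_eq_of_weight_eq : ∑ k, quadMult d k = ∑ k, quadMult d' k := by
  have hz := zIdx_add_two_mul_sum_quadMult_eq_of_weight_eq h
  simp only [Fintype.sum_option, quadMult] at hz ⊢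
  omega

end SameWeight

theorem quadExp_le_of_quadMult_ne_zero {d : Fin (2 * n + 1) →₀ ℕ} {k : Option (Fin n)}
    (hk : quadMult d k ≠ 0) : quadExp k ≤ d :=
  calc quadExp k ≤ quadMult d k • quadExp k := le_self_nsmul zero_le hk
    _ ≤ ∑ k, quadMult d k • quadExp k :=
        Finset.single_le_sum (f := fun k => quadMult d k • quadExp k)
          (fun _ _ => zero_le) (Finset.mem_univ k)
    _ ≤ residual d + ∑ k, quadMult d k • quadExp k := le_add_self
    _ = d := residual_add_sum_quadMult d

theorem exists_quadExp_le_of_weight_eq_of_lt (m : MonomialOrder (Fin (2 * n + 1)))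
    {k₀ : Option (Fin n)} (hk₀ : ∀ k, m.toSyn (quadExp k₀) ≤ m.toSyn (quadExp k))
    {d d' : Fin (2 * n + 1) →₀ ℕ}
    (hw : Finsupp.weight (expA n) d' = Finsupp.weight (expA n) d)
    (hlt : m.toSyn d' < m.toSyn d) :
    ∃ k, quadExp k ≤ d ∧ m.toSyn (quadExp k₀) < m.toSyn (quadExp k) := by
  by_contra! hmin
  have hsyn : ∀ d,
      m.toSyn d = m.toSyn (residual d) + ∑ k, quadMult d k • m.toSyn (quadExp k) :=
    fun d => by
      conv_lhs => rw [← residual_add_sum_quadMult d]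
      simp only [map_add, map_sum, map_nsmul]
  refine hlt.not_ge ?_
  rw [hsyn d, hsyn d', residual_eq_of_weight_eq hw]
  exact add_le_add_right (sum_nsmul_le_sum_nsmul_of_eq_min _ hk₀
    (fun k hk => le_antisymm (hmin k (quadExp_le_of_quadMult_ne_zero hk)) (hk₀ k))
    (sum_quadMult_eq_of_weight_eq hw.symm)) _

variable (K : Type) [Field K]

def quadBinomials (n : ℕ) : Set (MvPolynomial (Fin (2 * n + 1)) K) :=
  (Set.range fun i : Fin n => X (xIdx n i) * X (yIdx n i) - X (zIdx n) ^ 2) ∪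
    {g | ∃ i j : Fin n, i < j ∧ g = X (xIdx n i) * X (yIdx n i) - X (xIdx n j) * X (yIdx n j)}

theorem monomial_quadExp_none : monomial (quadExp none) (1 : K) = X (zIdx n) ^ 2 :=
  X_pow_eq_monomial.symm

theorem monomial_quadExp_some (i : Fin n) :
    monomial (quadExp (some i)) (1 : K) = X (xIdx n i) * X (yIdx n i) := by
  rw [quadExp, ← mul_one (1 : K), ← monomial_mul]
  rfl

theorem aeval_monomial_quadExp_sub (k k' : Option (Fin n)) :
    aeval (fun v => AddMonoidAlgebra.single (expA n v) (1 : K))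
      (monomial (quadExp k) (1 : K) - monomial (quadExp k') 1) = 0 := by
  rw [map_sub, aeval_single_monomial, aeval_single_monomial, weight_quadExp, weight_quadExp,
    sub_self]

theorem aeval_eq_zero_of_mem_quadBinomials :
    ∀ g ∈ quadBinomials K n,
      aeval (fun v => AddMonoidAlgebra.single (expA n v) (1 : K)) g = 0 := by
  rintro g (⟨i, rfl⟩ | ⟨i, j, -, rfl⟩)
  · beta_reduce
    rw [← monomial_quadExp_some, ← monomial_quadExp_none]
    exact aeval_monomial_quadExp_sub K _ _
  · rw [← monomial_quadExp_some, ← monomial_quadExp_some]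
    exact aeval_monomial_quadExp_sub K _ _

theorem monomial_quadExp_sub_mem_or_neg_mem {k k' : Option (Fin n)} (h : k ≠ k') :
    monomial (quadExp k) 1 - monomial (quadExp k') 1 ∈ quadBinomials K n ∨
      -(monomial (quadExp k) 1 - monomial (quadExp k') 1) ∈ quadBinomials K n := by
  simp only [neg_sub]
  rcases k with _ | i <;> rcases k' with _ | j
  · exact absurd rfl h
  · exact Or.inr (Or.inl ⟨j, by rw [monomial_quadExp_some, monomial_quadExp_none]⟩)
  · exact Or.inl (Or.inl ⟨i, by rw [monomial_quadExp_some, monomial_quadExp_none]⟩)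
  · have hij : i ≠ j := fun hij => h (hij ▸ rfl)
    simp only [monomial_quadExp_some]
    rcases hij.lt_or_gt with hij | hij
    · exact Or.inl (Or.inr ⟨i, j, hij, rfl⟩)
    · exact Or.inr (Or.inr ⟨j, i, hij, rfl⟩)

theorem exists_mem_quadBinomials_isInitialExp (m : MonomialOrder (Fin (2 * n + 1)))
    {k k₀ : Option (Fin n)} (h : m.toSyn (quadExp k₀) < m.toSyn (quadExp k)) :
    ∃ g ∈ quadBinomials K n, IsInitialExp m.ltRel g (quadExp k) := by
  have hne : k ≠ k₀ := by
    rintro rfl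
    exact h.false
  have hlead := isInitialExp_monomial_sub_monomial (K := K) m h
  rcases monomial_quadExp_sub_mem_or_neg_mem K hne with hg | hg
  · exact ⟨_, hg, hlead⟩
  · exact ⟨_, hg, (isInitialExp_neg_iff _ _ _).mpr hlead⟩

end ToricAn

theorem universalGB_of_An_general (K : Type) [Field K] (n : ℕ) :
    ∀ m : MonomialOrder (Fin (2 * n + 1)),
      IsGroebnerBasis m.ltRel (toricIdealA K n)
        ((Set.range fun i : Fin n =>
            (X (xIdx n i) * X (yIdx n i) - (X (zIdx n)) ^ 2 :
              MvPolynomial (Fin (2 * n + 1)) K)) ∪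
          {g | ∃ i j : Fin n, i < j ∧
            g = X (xIdx n i) * X (yIdx n i) - X (xIdx n j) * X (yIdx n j)}) := by
  intro m
  obtain ⟨k₀, hk₀⟩ := Finite.exists_min fun k : Option (Fin n) => m.toSyn (ToricAn.quadExp k)
  refine isGroebnerBasis_ker_aeval_single (expA n) m.ltRel (ToricAn.quadBinomials K n)
    (ToricAn.aeval_eq_zero_of_mem_quadBinomials K) fun d d' hw hlt => ?_
  obtain ⟨k, hkd, hk⟩ := ToricAn.exists_quadExp_le_of_weight_eq_of_lt m hk₀ hw hlt
  obtain ⟨g, hg, hlead⟩ := ToricAn.exists_mem_quadBinomials_isInitialExp K m hk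
  have hdvd : monomial d (1 : K) =
      monomial (d - ToricAn.quadExp k) 1 * monomial (ToricAn.quadExp k) 1 := by
    rw [monomial_mul, mul_one, tsub_add_cancel_of_le hkd]
  rw [hdvd]
  exact Ideal.mul_mem_left _ _ (Ideal.subset_span ⟨g, hg, _, hlead, rfl⟩)

/-- **Example 1.4.**  The set
`{x_i y_i - z² : 1 ≤ i ≤ n} ∪ {x_i y_i - x_j y_j : 1 ≤ i < j ≤ n}` is a
Gröbner basis of `I_{A_n}` with respect to every monomial order, i.e. a
universal Gröbner basis of `I_{A_n}`. -/
theorem universalGB_of_An (K : Type) [Field K] (n : ℕ) (hn : 1 ≤ n) :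
    ∀ m : MonomialOrder (Fin (2 * n + 1)),
      IsGroebnerBasis m.ltRel (toricIdealA K n)
        ((Set.range fun i : Fin n =>
            (X (xIdx n i) * X (yIdx n i) - (X (zIdx n)) ^ 2 :
              MvPolynomial (Fin (2 * n + 1)) K)) ∪
          {g | ∃ i j : Fin n, i < j ∧
            g = X (xIdx n i) * X (yIdx n i) - X (xIdx n j) * X (yIdx n j)}) :=
  universalGB_of_An_general K n

end
end
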